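/- arXiv:2408.01642 — 4 statements merged into one kernel-verified Lean document; each statement's English description precedes it below -/
import Mathlib

section
/- Exponential tilting of the standard GL: for Z ~ GL(0,1,α,β) with 0 < σ < β and any d ∈ ℝ, E[e^{Z·σ'} 𝟙_{Z ≤ -d}] with σ' = σ satisfies E[e^{σZ} 𝟙_{Z ≤ -d}] = (B(α+σ, β-σ)/B(α,β))·Φ(-d; α+σ, β-σ), where Φ(·; a, b) is the standard GL CDF with skew parameters a, b. In particular, for σ = 1 with 1 < β, E[e^Z 𝟙_{Z ≤ -d}] = (B(α+1, β-1)/B(α,β))·P(Z̃ ≤ -d) where Z̃ ~ GL(0,1,α+1,β-1). -/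
noncomputable def realBeta (a b : ℝ) : ℝ :=
  Real.Gamma a * Real.Gamma b / Real.Gamma (a + b)

noncomputable def stdGLPDF (α β x : ℝ) : ℝ :=
  (1 / realBeta α β) * (Real.exp (-x) / (1 + Real.exp (-x)) ^ 2) *
    (1 / (1 + Real.exp (-x))) ^ (α - 1) *
    (Real.exp (-x) / (1 + Real.exp (-x))) ^ (β - 1)

noncomputable def stdGLCDF (a b x : ℝ) : ℝ :=
  (1 / realBeta a b) * ∫ u in (0 : ℝ)..(1 / (1 + Real.exp (-x))),
    u ^ (a - 1) * (1 - u) ^ (b - 1)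

open Real MeasureTheory Set Filter intervalIntegral
open scoped Topology

lemma realBeta_pos {a b : ℝ} (ha : 0 < a) (hb : 0 < b) : 0 < realBeta a b := by
  unfold realBeta
  exact div_pos (mul_pos (Real.Gamma_pos_of_pos ha) (Real.Gamma_pos_of_pos hb))
    (Real.Gamma_pos_of_pos (by linarith))

lemma onePlusExp_pos (x : ℝ) : 0 < 1 + Real.exp (-x) := by positivity

/-- Representation of the pdf via rpow. -/
lemma stdGLPDF_eq (a b x : ℝ) :
    stdGLPDF a b x = (1 / realBeta a b) * Real.exp (-x) ^ b *
      (1 + Real.exp (-x)) ^ (-(a + b)) := by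
  have hE : (0 : ℝ) < Real.exp (-x) := Real.exp_pos _
  have h1E : (0 : ℝ) < 1 + Real.exp (-x) := onePlusExp_pos x
  set E := Real.exp (-x)
  set P := 1 + Real.exp (-x) with hPdef
  have e1 : (1 / P) ^ (a - 1) = P ^ (-(a - 1)) := by
    rw [one_div, Real.inv_rpow h1E.le, ← Real.rpow_neg h1E.le]
  have e2 : (E / P) ^ (b - 1) = E ^ (b - 1) * P ^ (-(b - 1)) := by
    rw [Real.div_rpow hE.le h1E.le, div_eq_mul_inv, ← Real.rpow_neg h1E.le]
  have e3 : E / P ^ 2 = E ^ (1 : ℝ) * P ^ (-(2 : ℝ)) := by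
    rw [Real.rpow_one, Real.rpow_neg h1E.le, div_eq_mul_inv]
    congr 2
    rw [← Real.rpow_natCast P 2]
    norm_num
  have e4 : E ^ b = E ^ (1 : ℝ) * E ^ (b - 1) := by
    rw [← Real.rpow_add hE]; ring_nf
  have e5 : P ^ (-(a + b)) = P ^ (-(2 : ℝ)) * P ^ (-(a - 1)) * P ^ (-(b - 1)) := by
    rw [← Real.rpow_add h1E, ← Real.rpow_add h1E]
    congr 1; ring
  unfold stdGLPDF
  rw [← hPdef, e1, e2, e3, e4, e5]
  ring

/-- pointwise tilting identity -/
lemma tilt_pointwise {σ α β : ℝ} (hα : 0 < α) (hβ : 0 < β) (hσ : 0 < σ) (hσβ : σ < β)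
    (x : ℝ) :
    Real.exp (σ * x) * stdGLPDF α β x =
      (realBeta (α + σ) (β - σ) / realBeta α β) * stdGLPDF (α + σ) (β - σ) x := by
  have hE : (0 : ℝ) < Real.exp (-x) := Real.exp_pos _
  have hB' : (0 : ℝ) < realBeta (α + σ) (β - σ) :=
    realBeta_pos (by linarith) (by linarith)
  rw [stdGLPDF_eq, stdGLPDF_eq]
  have h1 : Real.exp (σ * x) * Real.exp (-x) ^ β = Real.exp (-x) ^ (β - σ) := by
    rw [show Real.exp (σ * x) = Real.exp (-x) ^ (-σ) by
      rw [← Real.exp_mul]; ring_nf]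
    rw [← Real.rpow_add hE]; ring_nf
  have h2 : α + σ + (β - σ) = α + β := by ring
  have hB : (0 : ℝ) < realBeta α β := realBeta_pos hα hβ
  rw [h2, ← h1]
  field_simp

/-- the canonical logistic transform and its properties -/
lemma u_mem (x : ℝ) : (0 : ℝ) < 1 / (1 + Real.exp (-x)) ∧ 1 / (1 + Real.exp (-x)) < 1 := by
  have h1E := onePlusExp_pos x
  constructor
  · positivity
  · rw [div_lt_one h1E]
    linarith [Real.exp_pos (-x)]

lemma hasDerivAt_u (x : ℝ) :
    HasDerivAt (fun y => 1 / (1 + Real.exp (-y)))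
      (Real.exp (-x) / (1 + Real.exp (-x)) ^ 2) x := by
  have h1 : HasDerivAt (fun y : ℝ => 1 + Real.exp (-y)) (-Real.exp (-x)) x := by
    have := ((Real.hasDerivAt_exp (-x)).comp x (hasDerivAt_neg x)).const_add 1
    simpa using this
  have h2 := h1.inv (by positivity)
  simp only [one_div]
  exact h2.congr_deriv (by ring)

/-- interval integrability of the Beta integrand from 0 to any s₀ < 1 -/
lemma beta_intervalIntegrable {a b : ℝ} (ha : 0 < a) (s₀ : ℝ) (hs₀ : s₀ < 1) :
    IntervalIntegrable (fun u : ℝ => u ^ (a - 1) * (1 - u) ^ (b - 1)) volume 0 s₀ := by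
  apply IntervalIntegrable.mul_continuousOn
  · exact intervalIntegral.intervalIntegrable_rpow' (by linarith)
  · apply ContinuousOn.rpow_const (by fun_prop)
    intro u hu
    left
    have : u ≤ max 0 s₀ := hu.2
    have : u < 1 := lt_of_le_of_lt this (by simp [hs₀])
    intro h
    nlinarith [sub_eq_zero.mp h]

lemma beta_integrand_contAt {a b : ℝ} {s : ℝ} (hs0 : 0 < s) (hs1 : s < 1) :
    ContinuousAt (fun u : ℝ => u ^ (a - 1) * (1 - u) ^ (b - 1)) s := by
  apply ContinuousAt.mul
  · exact Real.continuousAt_rpow_const s (a - 1) (Or.inl hs0.ne')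
  · exact (Real.continuousAt_rpow_const (1 - s) (b - 1)
      (Or.inl (by linarith))).comp ((continuous_const.sub continuous_id).continuousAt)

/-- The CDF has the PDF as derivative. -/
lemma hasDerivAt_stdGLCDF {a b : ℝ} (ha : 0 < a) (hb : 0 < b) (x : ℝ) :
    HasDerivAt (stdGLCDF a b) (stdGLPDF a b x) x := by
  set u : ℝ → ℝ := fun y => 1 / (1 + Real.exp (-y)) with hu
  have hux := u_mem x
  have hg : HasDerivAt (fun s => ∫ t in (0:ℝ)..s, t ^ (a - 1) * (1 - t) ^ (b - 1))
      ((u x) ^ (a - 1) * (1 - u x) ^ (b - 1)) (u x) := by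
    apply intervalIntegral.integral_hasDerivAt_right
    · exact beta_intervalIntegrable ha _ hux.2
    · refine ⟨Set.Ioo 0 1, Ioo_mem_nhds hux.1 hux.2, ?_⟩
      refine ContinuousOn.aestronglyMeasurable ?_ measurableSet_Ioo
      exact fun s hs => (beta_integrand_contAt hs.1 hs.2).continuousWithinAt
    · exact beta_integrand_contAt hux.1 hux.2
  have hchain := (hg.comp x (hasDerivAt_u x)).const_mul (1 / realBeta a b)
  have heq : (1 / realBeta a b) * ((u x) ^ (a - 1) * (1 - u x) ^ (b - 1) *
      (Real.exp (-x) / (1 + Real.exp (-x)) ^ 2)) = stdGLPDF a b x := by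
    have h1E := onePlusExp_pos x
    have h1u : 1 - u x = Real.exp (-x) / (1 + Real.exp (-x)) := by
      rw [hu]; field_simp; ring
    rw [h1u]
    unfold stdGLPDF
    simp only [hu]
    ring
  rw [← heq]
  exact hchain

lemma tendsto_stdGLCDF_atBot {a b : ℝ} (ha : 0 < a) (hb : 0 < b) :
    Tendsto (stdGLCDF a b) atBot (𝓝 0) := by
  set g : ℝ → ℝ := fun u => u ^ (a - 1) * (1 - u) ^ (b - 1) with hgdef
  set H : ℝ → ℝ := fun s => ∫ t in (0:ℝ)..s, g t with hHdef
  have hint : IntegrableOn g (uIcc (0:ℝ) (1/2)) volume := by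
    have := beta_intervalIntegrable (b := b) ha (1/2) (by norm_num)
    rwa [intervalIntegrable_iff_integrableOn_Icc_of_le (by norm_num),
      ← uIcc_of_le (by norm_num : (0:ℝ) ≤ 1/2)] at this
  have hHcont : ContinuousOn H (uIcc (0:ℝ) (1/2)) :=
    intervalIntegral.continuousOn_primitive_interval hint
  have h0mem : (0 : ℝ) ∈ uIcc (0:ℝ) (1/2) := left_mem_uIcc
  have hHcw : ContinuousWithinAt H (uIcc (0:ℝ) (1/2)) 0 := hHcont 0 h0mem
  -- u x → 0 as x → -∞
  have hulim : Tendsto (fun x => 1 / (1 + Real.exp (-x))) atBot (𝓝 0) := by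
    simp only [one_div]
    apply Tendsto.comp tendsto_inv_atTop_zero
    apply tendsto_atTop_add_const_left
    exact Real.tendsto_exp_atTop.comp tendsto_neg_atBot_atTop
  have hmem : ∀ᶠ x in atBot, 1 / (1 + Real.exp (-x)) ∈ uIcc (0:ℝ) (1/2) := by
    filter_upwards [Filter.eventually_le_atBot (0:ℝ)] with x hx
    rw [uIcc_of_le (by norm_num : (0:ℝ) ≤ 1/2)]
    refine ⟨(u_mem x).1.le, ?_⟩
    rw [div_le_iff₀ (onePlusExp_pos x)]
    have : (1:ℝ) ≤ Real.exp (-x) := by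
      rw [show (1:ℝ) = Real.exp 0 by simp]
      exact Real.exp_le_exp.mpr (by linarith)
    linarith
  have hcomp : Tendsto (fun x => H (1 / (1 + Real.exp (-x)))) atBot (𝓝 (H 0)) := by
    apply hHcw.tendsto.comp
    rw [tendsto_nhdsWithin_iff]
    exact ⟨hulim, hmem⟩
  have hH0 : H 0 = 0 := intervalIntegral.integral_same
  rw [hH0] at hcomp
  have heq : stdGLCDF a b = fun x => (1 / realBeta a b) * H (1 / (1 + Real.exp (-x))) := rfl
  rw [heq]
  simpa using hcomp.const_mul (1 / realBeta a b)

lemma integrableOn_exp_mul_Iic' {a : ℝ} (ha : 0 < a) (c : ℝ) :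
    IntegrableOn (fun x => Real.exp (a * x)) (Iic c) := by
  refine integrableOn_Iic_of_intervalIntegral_norm_bounded (Real.exp (a * c) / a) c
    (fun y => ?_) tendsto_id ?_
  · exact (Real.continuous_exp.comp (continuous_const.mul continuous_id)).integrableOn_Ioc
  · filter_upwards with y
    simp only [id_eq]
    have hnorm : ∀ x : ℝ, ‖Real.exp (a * x)‖ = Real.exp (a * x) := fun x =>
      Real.norm_of_nonneg (Real.exp_pos _).le
    simp only [hnorm]
    have : (∫ x in y..c, Real.exp (a * x)) = a⁻¹ • ∫ x in (a*y)..(a*c), Real.exp x := by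
      rw [← intervalIntegral.integral_comp_mul_left _ ha.ne']
    rw [this, integral_exp, smul_eq_mul]
    rw [div_eq_inv_mul]
    have := Real.exp_pos (a * y)
    have hainv : (0:ℝ) < a⁻¹ := by positivity
    nlinarith

lemma stdGLPDF_nonneg {a b : ℝ} (ha : 0 < a) (hb : 0 < b) (x : ℝ) :
    0 ≤ stdGLPDF a b x := by
  rw [stdGLPDF_eq]
  have := realBeta_pos ha hb
  positivity

lemma stdGLPDF_le {a b : ℝ} (ha : 0 < a) (hb : 0 < b) (x : ℝ) :
    stdGLPDF a b x ≤ (1 / realBeta a b) * Real.exp (a * x) := by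
  rw [stdGLPDF_eq]
  have hE : (0 : ℝ) < Real.exp (-x) := Real.exp_pos _
  have h1E : (0 : ℝ) < 1 + Real.exp (-x) := onePlusExp_pos x
  have hB := realBeta_pos ha hb
  have hle : (1 + Real.exp (-x)) ^ (-(a + b)) ≤ Real.exp (-x) ^ (-(a + b)) := by
    rw [Real.rpow_neg h1E.le, Real.rpow_neg hE.le]
    apply inv_anti₀
    · exact Real.rpow_pos_of_pos hE _
    · exact Real.rpow_le_rpow hE.le (by linarith) (by linarith)
  calc (1 / realBeta a b) * Real.exp (-x) ^ b * (1 + Real.exp (-x)) ^ (-(a + b))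
      ≤ (1 / realBeta a b) * Real.exp (-x) ^ b * Real.exp (-x) ^ (-(a + b)) := by
        apply mul_le_mul_of_nonneg_left hle
        positivity
    _ = (1 / realBeta a b) * Real.exp (a * x) := by
        rw [mul_assoc, ← Real.rpow_add hE]
        congr 1
        rw [show b + -(a + b) = -a by ring, ← Real.exp_mul]
        ring_nf

lemma continuous_stdGLPDF (a b : ℝ) : Continuous (stdGLPDF a b) := by
  have : stdGLPDF a b = fun x => (1 / realBeta a b) * Real.exp (-x) ^ b *
      (1 + Real.exp (-x)) ^ (-(a + b)) := funext fun x => stdGLPDF_eq a b x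
  rw [this]
  apply Continuous.mul
  · apply Continuous.mul continuous_const
    exact (Real.continuous_exp.comp continuous_neg).rpow_const
      fun x => Or.inl (Real.exp_pos _).ne'
  · exact ((continuous_const.add (Real.continuous_exp.comp continuous_neg)).rpow_const
      fun x => Or.inl (onePlusExp_pos x).ne')

lemma integrableOn_stdGLPDF {a b : ℝ} (ha : 0 < a) (hb : 0 < b) (c : ℝ) :
    IntegrableOn (stdGLPDF a b) (Iic c) := by
  apply Integrable.mono' (((integrableOn_exp_mul_Iic' ha c).const_mul (1 / realBeta a b)))
  · exact (continuous_stdGLPDF a b).aestronglyMeasurable.restrict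
  · filter_upwards with x
    rw [Real.norm_of_nonneg (stdGLPDF_nonneg ha hb x)]
    exact stdGLPDF_le ha hb x

lemma integral_stdGLPDF_Iic {a b : ℝ} (ha : 0 < a) (hb : 0 < b) (t : ℝ) :
    ∫ x in Iic t, stdGLPDF a b x = stdGLCDF a b t := by
  have := integral_Iic_of_hasDerivAt_of_tendsto' (f := stdGLCDF a b) (f' := stdGLPDF a b)
    (a := t) (m := 0) (fun x _ => hasDerivAt_stdGLCDF ha hb x)
    (integrableOn_stdGLPDF ha hb t) (tendsto_stdGLCDF_atBot ha hb)
  rw [this, sub_zero]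

lemma tilt_integral {σ α β : ℝ} (hσ : 0 < σ) (hα : 0 < α) (hβ : 0 < β) (hσβ : σ < β)
    (d : ℝ) :
    (∫ x in Iic (-d), Real.exp (σ * x) * stdGLPDF α β x) =
      (realBeta (α + σ) (β - σ) / realBeta α β) * stdGLCDF (α + σ) (β - σ) (-d) := by
  have hpt : ∀ x : ℝ, Real.exp (σ * x) * stdGLPDF α β x =
      (realBeta (α + σ) (β - σ) / realBeta α β) * stdGLPDF (α + σ) (β - σ) x :=
    tilt_pointwise hα hβ hσ hσβ
  simp_rw [hpt]
  rw [MeasureTheory.integral_const_mul,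
    integral_stdGLPDF_Iic (by linarith) (by linarith) (-d)]

theorem stdGL_exponential_tilting (σ α β : ℝ) (hσ : 0 < σ) (hα : 0 < α) (hβ : 0 < β)
    (hσβ : σ < β) :
    (∀ d : ℝ,
      (∫ x in Set.Iic (-d), Real.exp (σ * x) * stdGLPDF α β x) =
        (realBeta (α + σ) (β - σ) / realBeta α β) * stdGLCDF (α + σ) (β - σ) (-d)) ∧
    ((1 : ℝ) < β → ∀ d : ℝ,
      (∫ x in Set.Iic (-d), Real.exp x * stdGLPDF α β x) =
        (realBeta (α + 1) (β - 1) / realBeta α β) *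
          ∫ x in Set.Iic (-d), stdGLPDF (α + 1) (β - 1) x) := by
  constructor
  · exact fun d => tilt_integral hσ hα hβ hσβ d
  · intro h1β d
    have h := tilt_integral (σ := 1) one_pos hα hβ h1β d
    simp only [one_mul] at h
    rw [h, integral_stdGLPDF_Iic (by linarith) (by linarith) (-d)]
end

section
/- The characteristic function of the GL(μ, σ, α, β) distribution is given by E[e^{izX}] = (B(α + iσz, β - iσz)/B(α, β))·e^{iμz} for all real z, where B is the complex Beta function B(a,b) = Γ(a)Γ(b)/Γ(a+b). -/
open Complex

noncomputable def logisticPDF (μ σ x : ℝ) : ℝ :=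
  Real.exp (-(x - μ) / σ) / (σ * (1 + Real.exp (-(x - μ) / σ)) ^ 2)

noncomputable def logisticCDF (μ σ x : ℝ) : ℝ :=
  1 / (1 + Real.exp (-(x - μ) / σ))

lemma logisticCDF_mem_Ioo {μ σ : ℝ} (hσ : 0 < σ) (x : ℝ) :
    logisticCDF μ σ x ∈ Set.Ioo (0:ℝ) 1 := by
  unfold logisticCDF
  have he : 0 < Real.exp (-(x - μ) / σ) := Real.exp_pos _
  constructor
  · positivity
  · rw [div_lt_one (by linarith)]; linarith

lemma logisticPDF_pos {μ σ : ℝ} (hσ : 0 < σ) (x : ℝ) : 0 < logisticPDF μ σ x := by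
  unfold logisticPDF
  have he : 0 < Real.exp (-(x - μ) / σ) := Real.exp_pos _
  positivity

lemma hasDerivAt_logisticCDF {μ σ : ℝ} (hσ : 0 < σ) (x : ℝ) :
    HasDerivAt (logisticCDF μ σ) (logisticPDF μ σ x) x := by
  have h1 : HasDerivAt (fun x : ℝ => -(x - μ) / σ) (-1 / σ) x := by
    simpa using (((hasDerivAt_id x).sub_const μ).neg.div_const σ)
  have h2 : HasDerivAt (fun x : ℝ => Real.exp (-(x - μ) / σ))
      (Real.exp (-(x - μ) / σ) * (-1 / σ)) x := (Real.hasDerivAt_exp _).comp x h1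
  have h3 : HasDerivAt (fun x : ℝ => 1 + Real.exp (-(x - μ) / σ))
      (Real.exp (-(x - μ) / σ) * (-1 / σ)) x := h2.const_add 1
  have hpos : (0:ℝ) < 1 + Real.exp (-(x - μ) / σ) := by positivity
  have h4 := h3.inv hpos.ne'
  have hval : logisticPDF μ σ x =
      -(Real.exp (-(x - μ) / σ) * (-1 / σ)) / (1 + Real.exp (-(x - μ) / σ)) ^ 2 := by
    unfold logisticPDF
    field_simp
  rw [hval]
  unfold logisticCDF
  simpa [one_div, Pi.inv_def] using h4

lemma strictMono_logisticCDF {μ σ : ℝ} (hσ : 0 < σ) : StrictMono (logisticCDF μ σ) :=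
  strictMono_of_deriv_pos fun x => by
    rw [(hasDerivAt_logisticCDF hσ x).deriv]; exact logisticPDF_pos hσ x

lemma range_logisticCDF {μ σ : ℝ} (hσ : 0 < σ) :
    Set.range (logisticCDF μ σ) = Set.Ioo (0:ℝ) 1 := by
  ext u
  constructor
  · rintro ⟨x, rfl⟩; exact logisticCDF_mem_Ioo hσ x
  · rintro ⟨hu0, hu1⟩
    refine ⟨μ + σ * Real.log (u / (1 - u)), ?_⟩
    unfold logisticCDF
    have h1u : (0:ℝ) < 1 - u := by linarith
    have harg : -(μ + σ * Real.log (u / (1 - u)) - μ) / σ = Real.log ((1 - u) / u) := by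
      rw [show (1 - u) / u = (u / (1 - u))⁻¹ by field_simp, Real.log_inv]
      field_simp
      ring
    rw [harg, Real.exp_log (by positivity)]
    rw [show 1 + (1 - u) / u = 1 / u by field_simp; ring]
    simp

lemma logisticCDF_log {μ σ : ℝ} (hσ : 0 < σ) (x : ℝ) :
    Real.log (logisticCDF μ σ x) - Real.log (1 - logisticCDF μ σ x) = (x - μ) / σ := by
  obtain ⟨hu0, hu1⟩ := logisticCDF_mem_Ioo hσ (μ := μ) x
  have h1u : (0:ℝ) < 1 - logisticCDF μ σ x := by linarith
  have hratio : logisticCDF μ σ x / (1 - logisticCDF μ σ x) = Real.exp ((x - μ) / σ) := by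
    unfold logisticCDF
    rw [neg_div, Real.exp_neg]
    have h1 : (0:ℝ) < 1 + (Real.exp ((x - μ) / σ))⁻¹ := by positivity
    field_simp
    ring
  rw [← Real.log_div hu0.ne' h1u.ne', hratio, Real.log_exp]

noncomputable def glPDF (μ σ α β x : ℝ) : ℝ :=
  (1 / realBeta α β) * logisticPDF μ σ x * logisticCDF μ σ x ^ (α - 1) *
    (1 - logisticCDF μ σ x) ^ (β - 1)

/-- Complex Beta function. -/
noncomputable def complexBeta (a b : ℂ) : ℂ :=
  Complex.Gamma a * Complex.Gamma b / Complex.Gamma (a + b)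

lemma key_pointwise {μ σ α β : ℝ} (hσ : 0 < σ) (z x : ℝ) :
    Complex.exp (Complex.I * z * x) * (glPDF μ σ α β x : ℂ)
      = |logisticPDF μ σ x| •
        ((realBeta α β : ℂ)⁻¹ * Complex.exp (Complex.I * μ * z) *
          ((logisticCDF μ σ x : ℂ) ^ ((α:ℂ) + Complex.I * σ * z - 1) *
           ((1 - logisticCDF μ σ x : ℝ) : ℂ) ^ ((β:ℂ) - Complex.I * σ * z - 1))) := by
  unfold glPDF
  obtain ⟨hu0, hu1⟩ := logisticCDF_mem_Ioo hσ (μ := μ) x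
  have h1u : (0:ℝ) < 1 - logisticCDF μ σ x := by linarith
  have hlog := logisticCDF_log hσ (μ := μ) x
  set u := logisticCDF μ σ x with hu
  rw [abs_of_pos (logisticPDF_pos hσ x)]
  have e1 : (u:ℂ) ^ ((α:ℂ) + Complex.I * σ * z - 1)
      = ((u ^ (α - 1) : ℝ) : ℂ) * Complex.exp (Complex.I * σ * z * Real.log u) := by
    rw [show (α:ℂ) + Complex.I * σ * z - 1 = ((α - 1 : ℝ) : ℂ) + Complex.I * σ * z by
      push_cast; ring]
    rw [Complex.cpow_add _ _ (by exact_mod_cast hu0.ne')]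
    rw [← Complex.ofReal_cpow hu0.le]
    congr 1
    rw [Complex.cpow_def_of_ne_zero (by exact_mod_cast hu0.ne'), ← Complex.ofReal_log hu0.le]
    ring_nf
  have e2 : ((1 - u : ℝ) : ℂ) ^ ((β:ℂ) - Complex.I * σ * z - 1)
      = (((1 - u) ^ (β - 1) : ℝ) : ℂ) * Complex.exp (-(Complex.I * σ * z) * Real.log (1 - u)) := by
    rw [show (β:ℂ) - Complex.I * σ * z - 1 = ((β - 1 : ℝ) : ℂ) + -(Complex.I * σ * z) by
      push_cast; ring]
    rw [Complex.cpow_add _ _ (by exact_mod_cast h1u.ne')]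
    rw [← Complex.ofReal_cpow h1u.le]
    congr 1
    rw [Complex.cpow_def_of_ne_zero (by exact_mod_cast h1u.ne'), ← Complex.ofReal_log h1u.le]
    ring_nf
  have h3 : (σ:ℂ) * ((Real.log u : ℂ) - (Real.log (1 - u) : ℂ)) = (x:ℂ) - μ := by
    rw [show ((Real.log u : ℂ) - (Real.log (1 - u) : ℂ))
        = ((Real.log u - Real.log (1 - u) : ℝ) : ℂ) by push_cast; ring, hlog]
    have hσc : (σ:ℂ) ≠ 0 := by exact_mod_cast hσ.ne'
    push_cast
    field_simp
  have hexp : Complex.exp (Complex.I * μ * z) *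
      (Complex.exp (Complex.I * σ * z * Real.log u) *
        Complex.exp (-(Complex.I * σ * z) * Real.log (1 - u)))
        = Complex.exp (Complex.I * z * x) := by
    rw [← Complex.exp_add, ← Complex.exp_add]
    congr 1
    linear_combination (Complex.I * (z:ℂ)) * h3
  rw [e1, e2, Complex.real_smul]
  push_cast
  linear_combination (-(1 / (realBeta α β : ℂ)) * (logisticPDF μ σ x : ℂ) *
    ((u ^ (α - 1) : ℝ) : ℂ) * (((1 - u) ^ (β - 1) : ℝ) : ℂ)) * hexp

theorem gl_characteristic_function (μ σ α β : ℝ)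
    (hσ : 0 < σ) (hα : 0 < α) (hβ : 0 < β) (z : ℝ) :
    (∫ x : ℝ, Complex.exp (Complex.I * z * x) * (glPDF μ σ α β x : ℂ)) =
      (complexBeta (α + Complex.I * σ * z) (β - Complex.I * σ * z) /
        complexBeta α β) * Complex.exp (Complex.I * μ * z) := by
  have hBpos : 0 < realBeta α β := by
    unfold realBeta
    have h1 := Real.Gamma_pos_of_pos hα
    have h2 := Real.Gamma_pos_of_pos hβ
    have h3 := Real.Gamma_pos_of_pos (add_pos hα hβ)
    positivity
  have himg : logisticCDF μ σ '' Set.univ = Set.Ioo (0:ℝ) 1 := by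
    rw [Set.image_univ, range_logisticCDF hσ]
  have step1 : (∫ x : ℝ, Complex.exp (Complex.I * z * x) * (glPDF μ σ α β x : ℂ))
      = ∫ x : ℝ, |logisticPDF μ σ x| •
          ((realBeta α β : ℂ)⁻¹ * Complex.exp (Complex.I * μ * z) *
            ((logisticCDF μ σ x : ℂ) ^ ((α:ℂ) + Complex.I * σ * z - 1) *
             ((1 - logisticCDF μ σ x : ℝ) : ℂ) ^ ((β:ℂ) - Complex.I * σ * z - 1))) :=
    MeasureTheory.integral_congr_ae (Filter.Eventually.of_forall fun x => key_pointwise hσ z x)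
  have step2 := MeasureTheory.integral_image_eq_integral_abs_deriv_smul
    (s := Set.univ) (f := logisticCDF μ σ) MeasurableSet.univ
    (fun x _ => (hasDerivAt_logisticCDF hσ x).hasDerivWithinAt)
    ((strictMono_logisticCDF hσ).injective.injOn)
    (fun u : ℝ => (realBeta α β : ℂ)⁻¹ * Complex.exp (Complex.I * μ * z) *
      ((u : ℂ) ^ ((α:ℂ) + Complex.I * σ * z - 1) *
       ((1 - u : ℝ) : ℂ) ^ ((β:ℂ) - Complex.I * σ * z - 1)))
  rw [himg, MeasureTheory.setIntegral_univ] at step2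
  rw [step1, ← step2]
  have hbeta_int : (∫ u in Set.Ioo (0:ℝ) 1,
      ((u:ℂ) ^ ((α:ℂ) + Complex.I * σ * z - 1) *
       ((1 - u : ℝ) : ℂ) ^ ((β:ℂ) - Complex.I * σ * z - 1)))
      = Complex.betaIntegral ((α:ℂ) + Complex.I * σ * z) ((β:ℂ) - Complex.I * σ * z) := by
    rw [Complex.betaIntegral, intervalIntegral.integral_of_le zero_le_one,
      MeasureTheory.integral_Ioc_eq_integral_Ioo]
    simp only [Complex.ofReal_sub, Complex.ofReal_one]
  have hga : (0:ℝ) < ((α:ℂ) + Complex.I * σ * z).re := by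
    simp [Complex.add_re, Complex.mul_re]
    exact hα
  have hgb : (0:ℝ) < ((β:ℂ) - Complex.I * σ * z).re := by
    simp [Complex.sub_re, Complex.mul_re]
    exact hβ
  have hsum : ((α:ℂ) + Complex.I * σ * z) + ((β:ℂ) - Complex.I * σ * z) = ((α + β : ℝ) : ℂ) := by
    push_cast; ring
  have hΓ : Complex.Gamma (((α:ℂ) + Complex.I * σ * z) + ((β:ℂ) - Complex.I * σ * z)) ≠ 0 := by
    rw [hsum]
    apply Complex.Gamma_ne_zero_of_re_pos
    simp only [Complex.ofReal_re]
    positivity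
  have hb1 : complexBeta ((α:ℂ) + Complex.I * σ * z) ((β:ℂ) - Complex.I * σ * z)
      = Complex.betaIntegral ((α:ℂ) + Complex.I * σ * z) ((β:ℂ) - Complex.I * σ * z) := by
    unfold complexBeta
    rw [Complex.Gamma_mul_Gamma_eq_betaIntegral hga hgb]
    exact mul_div_cancel_left₀ _ hΓ
  have hb2 : complexBeta (α:ℂ) (β:ℂ) = (realBeta α β : ℂ) := by
    unfold complexBeta realBeta
    rw [← Complex.ofReal_add, Complex.Gamma_ofReal, Complex.Gamma_ofReal, Complex.Gamma_ofReal]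
    push_cast
    ring
  rw [MeasureTheory.integral_const_mul, hbeta_int, hb2, ← hb1]
  have hBne : (realBeta α β : ℂ) ≠ 0 := by exact_mod_cast hBpos.ne'
  field_simp
end

section
/- The Lévy density of the GL distribution, v(x) = exp(-(β·𝟙_{x>0} + α·𝟙_{x<0})·|x|/σ) / (|x|·(1 - e^{-|x|/σ})) for x ≠ 0, satisfies the Lévy measure integrability condition: ∫_ℝ min(1, x²)·v(x) dx < ∞. -/
open MeasureTheory

/-- The Lévy density of the GL distribution (set to 0 at the origin). -/
noncomputable def glLevyDensity (σ α β x : ℝ) : ℝ :=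
  if x = 0 then 0 else
    Real.exp (-((if 0 < x then β else α) * |x|) / σ) /
      (|x| * (1 - Real.exp (-|x| / σ)))

lemma integrable_exp_neg_abs' {b : ℝ} (hb : 0 < b) :
    Integrable fun x : ℝ => Real.exp (-(b * |x|)) := by
  have h1 : IntegrableOn (fun x : ℝ => Real.exp (-|x|)) (Set.Iic 0) := by
    refine (integrableOn_exp_Iic 0).congr_fun (fun x hx => ?_) measurableSet_Iic
    simp [abs_of_nonpos (Set.mem_Iic.mp hx)]
  have h2 : IntegrableOn (fun x : ℝ => Real.exp (-|x|)) (Set.Ioi 0) := by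
    refine (exp_neg_integrableOn_Ioi 0 one_pos).congr_fun (fun x hx => ?_) measurableSet_Ioi
    simp [abs_of_pos (Set.mem_Ioi.mp hx)]
  have h : Integrable (fun x : ℝ => Real.exp (-|x|)) := by
    rw [← integrableOn_univ, ← Set.Iic_union_Ioi (a := (0 : ℝ))]
    exact h1.union h2
  have := (integrable_comp_mul_left_iff (fun x : ℝ => Real.exp (-|x|)) hb.ne').2 h
  simpa [abs_mul, abs_of_pos hb] using this

lemma measurable_glLevyDensity (σ α β : ℝ) :
    Measurable fun x : ℝ => glLevyDensity σ α β x := by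
  have h1 : Measurable fun x : ℝ => (if 0 < x then β else α) :=
    Measurable.ite (measurableSet_lt measurable_const measurable_id)
      measurable_const measurable_const
  unfold glLevyDensity
  apply Measurable.ite (measurableSet_eq_fun measurable_id measurable_const)
    measurable_const
  apply Measurable.div
  · exact Real.measurable_exp.comp (((h1.mul measurable_abs).neg).div measurable_const)
  · exact measurable_abs.mul (measurable_const.sub
      (Real.measurable_exp.comp (measurable_abs.neg.div measurable_const)))

theorem glLevyDensity_levy_measure_condition (σ α β : ℝ)
    (hσ : 0 < σ) (hα : 0 < α) (hβ : 0 < β) :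
    Integrable (fun x : ℝ => min 1 (x ^ 2) * glLevyDensity σ α β x) := by
  set c := min α β with hc
  have hc0 : 0 < c := lt_min hα hβ
  -- majorant
  set K : ℝ := σ + 2 * σ / c with hK
  have hK0 : 0 < K := by positivity
  have hmaj : Integrable fun x : ℝ => K * Real.exp (-(c / (2 * σ) * |x|)) :=
    (integrable_exp_neg_abs' (by positivity)).const_mul K
  refine hmaj.mono' ?_ ?_
  · exact ((measurable_const.min (measurable_id.pow_const 2)).mul
      (measurable_glLevyDensity σ α β)).aestronglyMeasurable
  · refine Filter.Eventually.of_forall fun x => ?_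
    rcases eq_or_ne x 0 with rfl | hx
    · simp [glLevyDensity]
      positivity
    · have hax : 0 < |x| := abs_pos.mpr hx
      have hexp : Real.exp (-|x| / σ) < 1 := by
        rw [Real.exp_lt_one_iff]
        exact div_neg_of_neg_of_pos (neg_neg_iff_pos.mpr hax) hσ
      have hden : 0 < |x| * (1 - Real.exp (-|x| / σ)) :=
        mul_pos hax (by linarith)
      have hv : glLevyDensity σ α β x =
          Real.exp (-((if 0 < x then β else α) * |x|) / σ) /
            (|x| * (1 - Real.exp (-|x| / σ))) := by
        simp [glLevyDensity, hx]
      -- nonnegativity of f x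
      have hfnn : 0 ≤ min 1 (x ^ 2) * glLevyDensity σ α β x := by
        apply mul_nonneg (le_min zero_le_one (sq_nonneg x))
        rw [hv]; positivity
      rw [Real.norm_of_nonneg hfnn]
      -- key lower bound on the denominator : |x|(1-e^{-|x|/σ}) ≥ x²/(σ+|x|)
      have ht : (0:ℝ) < |x| / σ := by positivity
      have hexp_le : Real.exp (-(|x| / σ)) ≤ 1 / (1 + |x| / σ) := by
        rw [Real.exp_neg, inv_eq_one_div]
        apply one_div_le_one_div_of_le (by positivity)
        linarith [Real.add_one_le_exp (|x| / σ)]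
      have hlow : x ^ 2 / (σ + |x|) ≤ |x| * (1 - Real.exp (-|x| / σ)) := by
        have h1 : |x| / σ / (1 + |x| / σ) ≤ 1 - Real.exp (-|x| / σ) := by
          have : -|x| / σ = -(|x| / σ) := by ring
          rw [this]
          have : |x| / σ / (1 + |x| / σ) = 1 - 1 / (1 + |x| / σ) := by
            field_simp
            ring
          rw [this]
          linarith
        calc x ^ 2 / (σ + |x|) = |x| * (|x| / σ / (1 + |x| / σ)) := by
              rw [← sq_abs]
              field_simp
          _ ≤ |x| * (1 - Real.exp (-|x| / σ)) := by
              apply mul_le_mul_of_nonneg_left h1 (abs_nonneg x)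
      -- bound the exponential numerator
      have hwc : c ≤ (if 0 < x then β else α) := by
        split <;> [exact min_le_right α β; exact min_le_left α β]
      have hnum : Real.exp (-((if 0 < x then β else α) * |x|) / σ) ≤
          Real.exp (-(c * |x|) / σ) := by
        apply Real.exp_le_exp.mpr
        exact (div_le_div_iff_of_pos_right hσ).mpr
          (neg_le_neg (mul_le_mul_of_nonneg_right hwc (abs_nonneg x)))
      have step1 : min 1 (x ^ 2) * glLevyDensity σ α β x ≤
          Real.exp (-(c * |x|) / σ) * (σ + |x|) := by
        rw [hv]
        have hmin : min 1 (x ^ 2) ≤ x ^ 2 := min_le_right _ _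
        have hx2 : (0:ℝ) < x ^ 2 := by positivity
        have hσx : (0:ℝ) < σ + |x| := by positivity
        calc min 1 (x ^ 2) *
              (Real.exp (-((if 0 < x then β else α) * |x|) / σ) /
                (|x| * (1 - Real.exp (-|x| / σ))))
            ≤ x ^ 2 * (Real.exp (-(c * |x|) / σ) / (x ^ 2 / (σ + |x|))) := by
              apply mul_le_mul hmin ?_ (by positivity) (le_of_lt hx2)
              exact div_le_div₀ (Real.exp_nonneg _) hnum (by positivity) hlow
          _ = Real.exp (-(c * |x|) / σ) * (σ + |x|) := by
              field_simp
      have step2 : Real.exp (-(c * |x|) / σ) * (σ + |x|) ≤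
          K * Real.exp (-(c / (2 * σ) * |x|)) := by
        set a : ℝ := c / (2 * σ) with ha
        have ha0 : 0 < a := by positivity
        have e1 : -(c * |x|) / σ = -(a * |x|) + -(a * |x|) := by
          rw [ha]; field_simp; ring
        rw [e1, Real.exp_add]
        have hE1 : Real.exp (-(a * |x|)) ≤ 1 := by
          rw [Real.exp_le_one_iff]
          have : 0 ≤ a * |x| := by positivity
          linarith
        have hE2 : |x| * Real.exp (-(a * |x|)) ≤ 2 * σ / c := by
          have key : a * |x| * Real.exp (-(a * |x|)) ≤ 1 := by
            rw [Real.exp_neg]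
            rw [mul_inv_le_iff₀ (Real.exp_pos _), one_mul]
            linarith [Real.add_one_le_exp (a * |x|), abs_nonneg x,
              mul_nonneg ha0.le (abs_nonneg x)]
          calc |x| * Real.exp (-(a * |x|))
              = (1 / a) * (a * |x| * Real.exp (-(a * |x|))) := by
                field_simp
            _ ≤ (1 / a) * 1 := by
                apply mul_le_mul_of_nonneg_left key (by positivity)
            _ = 2 * σ / c := by rw [ha]; field_simp
        calc Real.exp (-(a * |x|)) * Real.exp (-(a * |x|)) * (σ + |x|)
            = (σ * Real.exp (-(a * |x|)) + |x| * Real.exp (-(a * |x|))) *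
                Real.exp (-(a * |x|)) := by ring
          _ ≤ (σ * 1 + 2 * σ / c) * Real.exp (-(a * |x|)) := by
              apply mul_le_mul_of_nonneg_right ?_ (Real.exp_nonneg _)
              have := mul_le_mul_of_nonneg_left hE1 hσ.le
              linarith
          _ = K * Real.exp (-(a * |x|)) := by rw [hK]; ring
      exact step1.trans step2
end

section
/- Put pricing formula for the additive logistic model: with S_T = S_0·e^{X_T}, X_T = rT - μ(T) + σ(T)·Z where Z ~ GL(0,1,α(T),β(T)), σ(T) < β(T) and μ(T) = log(B(α(T)+σ(T), β(T)-σ(T))/B(α(T),β(T))), the discounted put value satisfies e^{-rT}·E[(K - S_T)⁺] = e^{-rT}·K·Φ(-d; α(T), β(T)) - S_0·Φ(-d; α(T)+σ(T), β(T)-σ(T)), where d = (log(S_0/K) + rT - μ(T))/σ(T) and Φ(·; a, b) is the standard GL CDF. -/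
open Real MeasureTheory Set

noncomputable def logisticFn (z : ℝ) : ℝ := 1 / (1 + Real.exp (-z))

lemma one_add_exp_pos (z : ℝ) : 0 < 1 + Real.exp (-z) := by positivity

lemma logisticFn_mem (z : ℝ) : logisticFn z ∈ Set.Ioo (0:ℝ) 1 := by
  have h := one_add_exp_pos z
  constructor
  · exact div_pos one_pos h
  · rw [logisticFn, div_lt_one h]
    linarith [Real.exp_pos (-z)]

lemma one_sub_logisticFn (z : ℝ) : 1 - logisticFn z = Real.exp (-z) / (1 + Real.exp (-z)) := by
  have h := (one_add_exp_pos z).ne'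
  rw [logisticFn]; field_simp; ring

lemma logisticFn_ratio (z : ℝ) : logisticFn z / (1 - logisticFn z) = Real.exp z := by
  rw [one_sub_logisticFn, logisticFn]
  have h := (one_add_exp_pos z).ne'
  have h2 := (Real.exp_pos (-z)).ne'
  field_simp
  rw [← Real.exp_add]
  simp

lemma logisticFn_hasDerivAt (z : ℝ) :
    HasDerivAt logisticFn (Real.exp (-z) / (1 + Real.exp (-z)) ^ 2) z := by
  have h1 : HasDerivAt (fun z : ℝ => 1 + Real.exp (-z)) (-Real.exp (-z)) z := by
    simpa using (HasDerivAt.const_add 1 (((Real.hasDerivAt_exp (-z)).comp z (hasDerivAt_neg z))))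
  have h := h1.inv (one_add_exp_pos z).ne'
  have : -(-Real.exp (-z)) / (1 + Real.exp (-z)) ^ 2 = Real.exp (-z) / (1 + Real.exp (-z)) ^ 2 := by ring
  rw [show logisticFn = fun z : ℝ => (1 + Real.exp (-z))⁻¹ by funext x; rw [logisticFn, one_div]]
  rw [← this]; exact h

lemma logisticFn_injective : Function.Injective logisticFn := by
  intro a b hab
  have := one_add_exp_pos a
  have := one_add_exp_pos b
  rw [logisticFn, logisticFn, div_eq_div_iff (by positivity) (by positivity)] at hab
  have : Real.exp (-a) = Real.exp (-b) := by linarith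
  have := Real.exp_injective this
  linarith [neg_injective this]

lemma logisticFn_range : Set.range logisticFn = Set.Ioo (0:ℝ) 1 := by
  ext u
  constructor
  · rintro ⟨z, rfl⟩; exact logisticFn_mem z
  · rintro ⟨h0, h1⟩
    refine ⟨-Real.log ((1 - u) / u), ?_⟩
    rw [logisticFn, neg_neg, Real.exp_log (by apply div_pos <;> linarith)]
    field_simp; ring

lemma logistic_cv (H : ℝ → ℝ) :
    ∫ u in Set.Ioo (0:ℝ) 1, H u
      = ∫ z : ℝ, (Real.exp (-z) / (1 + Real.exp (-z)) ^ 2) * H (logisticFn z) := by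
  have key := MeasureTheory.integral_image_eq_integral_abs_deriv_smul (s := Set.univ)
    (f := logisticFn) (f' := fun z => Real.exp (-z) / (1 + Real.exp (-z)) ^ 2)
    MeasurableSet.univ (fun x _ => (logisticFn_hasDerivAt x).hasDerivWithinAt)
    (logisticFn_injective.injOn) H
  rw [Set.image_univ, logisticFn_range] at key
  rw [key, MeasureTheory.Measure.restrict_univ]
  congr 1
  ext z
  rw [abs_of_pos (by positivity), smul_eq_mul]

lemma kernelIntegrableOn {a b c : ℝ} (ha : 0 < a) (hc0 : 0 < c) (hc1 : c < 1) :
    MeasureTheory.IntegrableOn (fun u : ℝ => u ^ (a-1) * (1-u) ^ (b-1)) (Set.Ioo 0 c) := by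
  have h1 : IntervalIntegrable (fun u : ℝ => u ^ (a-1)) volume 0 c :=
    intervalIntegral.intervalIntegrable_rpow' (by linarith)
  have h2 : ContinuousOn (fun u : ℝ => (1-u) ^ (b-1)) (Set.uIcc 0 c) := by
    apply ContinuousOn.rpow_const
    · exact (continuous_const.sub continuous_id).continuousOn
    · intro x hx
      left
      rw [Set.uIcc_of_le hc0.le] at hx
      have := hx.2
      intro h; nlinarith
  have h3 := h1.mul_continuousOn h2
  rw [intervalIntegrable_iff_integrableOn_Ioc_of_le hc0.le] at h3
  exact h3.mono_set Set.Ioo_subset_Ioc_self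

lemma intervalIntegral_eq_Ioo (f : ℝ → ℝ) {c : ℝ} (hc : 0 ≤ c) :
    ∫ u in (0:ℝ)..c, f u = ∫ u in Set.Ioo (0:ℝ) c, f u := by
  rw [intervalIntegral.integral_of_le hc, MeasureTheory.integral_Ioc_eq_integral_Ioo]

theorem additive_logistic_put_pricing (S₀ K T r σ α β : ℝ)
    (hS : 0 < S₀) (hK : 0 < K) (hT : 0 < T) (hr : 0 < r)
    (hσ : 0 < σ) (hα : 0 < α) (hβ : 0 < β) (hσβ : σ < β) :
    let μT := Real.log (realBeta (α + σ) (β - σ) / realBeta α β)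
    let d := (Real.log (S₀ / K) + r * T - μT) / σ
    Real.exp (-(r * T)) *
        (∫ z : ℝ, max (K - S₀ * Real.exp (r * T - μT + σ * z)) 0 * stdGLPDF α β z) =
      Real.exp (-(r * T)) * K * stdGLCDF α β (-d) -
        S₀ * stdGLCDF (α + σ) (β - σ) (-d) := by
  intro μT d
  have hμT : μT = Real.log (realBeta (α + σ) (β - σ) / realBeta α β) := rfl
  have hd : d = (Real.log (S₀ / K) + r * T - μT) / σ := rfl
  set B := realBeta α β with hB
  set B' := realBeta (α + σ) (β - σ) with hB'
  have hBpos : 0 < B := by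
    have g1 := Real.Gamma_pos_of_pos hα
    have g2 := Real.Gamma_pos_of_pos hβ
    have g3 := Real.Gamma_pos_of_pos (add_pos hα hβ)
    rw [hB, realBeta]; positivity
  have hB'pos : 0 < B' := by
    have g1 := Real.Gamma_pos_of_pos (by linarith : (0:ℝ) < α + σ)
    have g2 := Real.Gamma_pos_of_pos (by linarith : (0:ℝ) < β - σ)
    have g3 := Real.Gamma_pos_of_pos (show (0:ℝ) < α + σ + (β - σ) by linarith)
    rw [hB', realBeta]; positivity
  have hexpμ : Real.exp μT = B' / B := by
    rw [hμT]; exact Real.exp_log (div_pos hB'pos hBpos)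
  set c := S₀ * Real.exp (r * T - μT) with hc
  have hcpos : 0 < c := by positivity
  set ud := 1 / (1 + Real.exp d) with hud
  have hudeq : logisticFn (-d) = ud := by rw [logisticFn, neg_neg]
  have hudmem : ud ∈ Set.Ioo (0:ℝ) 1 := hudeq ▸ logisticFn_mem (-d)
  obtain ⟨hud0, hud1⟩ := hudmem
  have hratio : ud / (1 - ud) = Real.exp (-d) := by
    rw [← hudeq]; exact logisticFn_ratio (-d)
  have hσd : σ * d = Real.log (S₀ / K) + r * T - μT := by
    rw [hd]; field_simp
  have hkey : c * (ud / (1 - ud)) ^ σ = K := by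
    have h1 : (Real.exp (-d)) ^ σ = Real.exp (-(σ * d)) := by
      rw [← Real.exp_mul]; ring_nf
    rw [hratio, h1, hσd, hc, mul_assoc, ← Real.exp_add]
    have h2 : r * T - μT + -(Real.log (S₀ / K) + r * T - μT) = -Real.log (S₀ / K) := by ring
    rw [h2, Real.exp_neg, Real.exp_log (div_pos hS hK)]
    field_simp
  set H : ℝ → ℝ := fun u => max (K - c * (u / (1 - u)) ^ σ) 0 *
      ((1 / B) * u ^ (α - 1) * (1 - u) ^ (β - 1)) with hH
  -- Step 1: change of variables
  have step1 : (∫ z : ℝ, max (K - S₀ * Real.exp (r * T - μT + σ * z)) 0 * stdGLPDF α β z)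
      = ∫ u in Set.Ioo (0:ℝ) 1, H u := by
    rw [logistic_cv H]
    apply MeasureTheory.integral_congr_ae
    filter_upwards with z
    have h2 := one_sub_logisticFn z
    have h3 := logisticFn_ratio z
    have h4 : c * (logisticFn z / (1 - logisticFn z)) ^ σ
        = S₀ * Real.exp (r * T - μT + σ * z) := by
      rw [h3, ← Real.exp_mul, hc, mul_assoc, ← Real.exp_add, mul_comm z σ]
    rw [hH]
    simp only []
    rw [h4, h2, stdGLPDF, ← hB]
    have h5 : (1:ℝ) / (1 + Real.exp (-z)) = logisticFn z := rfl
    rw [h5]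
    ring
  -- monotonicity facts
  have hmono_lt : ∀ u ∈ Set.Ioo (0:ℝ) ud, c * (u / (1 - u)) ^ σ ≤ K := by
    intro u hu
    rw [← hkey]
    have h1u : 0 < 1 - u := by have := hu.2; linarith
    have h1ud : 0 < 1 - ud := by linarith
    have hle : u / (1 - u) ≤ ud / (1 - ud) := by
      rw [div_le_div_iff₀ h1u h1ud]
      nlinarith [hu.1, hu.2]
    have h := Real.rpow_le_rpow (div_nonneg hu.1.le h1u.le) hle hσ.le
    exact mul_le_mul_of_nonneg_left h hcpos.le
  have hmono_ge : ∀ u ∈ Set.Ico ud 1, K ≤ c * (u / (1 - u)) ^ σ := by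
    intro u hu
    rw [← hkey]
    have h1u : 0 < 1 - u := by have := hu.2; linarith
    have h1ud : 0 < 1 - ud := by linarith
    have hle : ud / (1 - ud) ≤ u / (1 - u) := by
      rw [div_le_div_iff₀ h1ud h1u]
      nlinarith [hu.1, hu.2]
    have h := Real.rpow_le_rpow (div_nonneg hud0.le h1ud.le) hle hσ.le
    exact mul_le_mul_of_nonneg_left h hcpos.le
  have hzero : Set.EqOn H (fun _ => (0:ℝ)) (Set.Ico ud 1) := by
    intro u hu
    have : max (K - c * (u / (1 - u)) ^ σ) 0 = 0 :=
      max_eq_right (by linarith [hmono_ge u hu])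
    simp only [hH, this, zero_mul]
  have hEq : Set.EqOn H (fun u => (K / B) * (u ^ (α - 1) * (1 - u) ^ (β - 1))
      - (c / B) * (u ^ (α + σ - 1) * (1 - u) ^ (β - σ - 1))) (Set.Ioo 0 ud) := by
    intro u hu
    have h0u : 0 < u := hu.1
    have h1u : 0 < 1 - u := by have := hu.2; linarith
    have hmax : max (K - c * (u / (1 - u)) ^ σ) 0 = K - c * (u / (1 - u)) ^ σ :=
      max_eq_left (by linarith [hmono_lt u hu])
    have hr1 : (u / (1 - u)) ^ σ = u ^ σ * (1 - u) ^ (-σ) := by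
      rw [Real.div_rpow h0u.le h1u.le, Real.rpow_neg h1u.le, div_eq_mul_inv]
    have hr2 : u ^ (α + σ - 1) = u ^ σ * u ^ (α - 1) := by
      rw [← Real.rpow_add h0u]; ring_nf
    have hr3 : (1 - u) ^ (β - σ - 1) = (1 - u) ^ (-σ) * (1 - u) ^ (β - 1) := by
      rw [← Real.rpow_add h1u]; ring_nf
    simp only [hH]
    rw [hmax, hr1, hr2, hr3]
    ring
  have hi1 : MeasureTheory.IntegrableOn (fun u : ℝ => u ^ (α - 1) * (1 - u) ^ (β - 1))
      (Set.Ioo 0 ud) := kernelIntegrableOn hα hud0 hud1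
  have hi2 : MeasureTheory.IntegrableOn
      (fun u : ℝ => u ^ (α + σ - 1) * (1 - u) ^ (β - σ - 1)) (Set.Ioo 0 ud) :=
    kernelIntegrableOn (by linarith) hud0 hud1
  have hiH : MeasureTheory.IntegrableOn H (Set.Ioo 0 ud) :=
    MeasureTheory.IntegrableOn.congr_fun
      ((hi1.const_mul (K / B)).sub (hi2.const_mul (c / B))) hEq.symm measurableSet_Ioo
  have hiH0 : MeasureTheory.IntegrableOn H (Set.Ico ud 1) :=
    (MeasureTheory.integrableOn_congr_fun hzero measurableSet_Ico).mpr
      (MeasureTheory.integrableOn_zero)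
  have step2 : ∫ u in Set.Ioo (0:ℝ) 1, H u = ∫ u in Set.Ioo 0 ud, H u := by
    rw [← Set.Ioo_union_Ico_eq_Ioo hud0 hud1.le,
      MeasureTheory.setIntegral_union (by rw [Set.disjoint_left]; rintro x ⟨_, h2⟩ ⟨h3, _⟩; exact absurd h3 (not_le.mpr h2)) measurableSet_Ico hiH hiH0]
    rw [MeasureTheory.setIntegral_congr_fun measurableSet_Ico hzero]
    simp
  have step3 : ∫ u in Set.Ioo 0 ud, H u
      = (K / B) * (∫ u in Set.Ioo 0 ud, u ^ (α - 1) * (1 - u) ^ (β - 1))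
        - (c / B) * (∫ u in Set.Ioo 0 ud, u ^ (α + σ - 1) * (1 - u) ^ (β - σ - 1)) := by
    rw [MeasureTheory.setIntegral_congr_fun measurableSet_Ioo hEq,
      MeasureTheory.integral_sub (hi1.const_mul (K / B)) (hi2.const_mul (c / B)),
      MeasureTheory.integral_const_mul, MeasureTheory.integral_const_mul]
  have hcdf1 : stdGLCDF α β (-d)
      = (1 / B) * ∫ u in Set.Ioo (0:ℝ) ud, u ^ (α - 1) * (1 - u) ^ (β - 1) := by
    rw [stdGLCDF, ← hB]
    congr 1
    rw [show (1:ℝ) / (1 + Real.exp (-(-d))) = ud by rw [neg_neg]]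
    exact intervalIntegral_eq_Ioo _ hud0.le
  have hcdf2 : stdGLCDF (α + σ) (β - σ) (-d)
      = (1 / B') * ∫ u in Set.Ioo (0:ℝ) ud, u ^ (α + σ - 1) * (1 - u) ^ (β - σ - 1) := by
    rw [stdGLCDF, ← hB']
    congr 1
    rw [show (1:ℝ) / (1 + Real.exp (-(-d))) = ud by rw [neg_neg]]
    exact intervalIntegral_eq_Ioo _ hud0.le
  have hI1 : (K / B) * (∫ u in Set.Ioo 0 ud, u ^ (α - 1) * (1 - u) ^ (β - 1))
      = K * stdGLCDF α β (-d) := by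
    rw [hcdf1]; field_simp
  have hI2 : (c / B) * (∫ u in Set.Ioo 0 ud, u ^ (α + σ - 1) * (1 - u) ^ (β - σ - 1))
      = S₀ * Real.exp (r * T) * stdGLCDF (α + σ) (β - σ) (-d) := by
    rw [hcdf2, hc]
    have he : Real.exp (r * T - μT) = Real.exp (r * T) * (B / B') := by
      rw [Real.exp_sub, hexpμ]
      field_simp
    rw [he]
    field_simp
  rw [step1, step2, step3, hI1, hI2]
  have hee : Real.exp (-(r * T)) * Real.exp (r * T) = 1 := by
    rw [← Real.exp_add]; simp
  linear_combination (-(S₀ * stdGLCDF (α + σ) (β - σ) (-d))) * hee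
end
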